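/- Let a, b > 0, let b/2 ≤ x < a/2 and y ≥ 0, and set R = [−a/2, a/2] × [−b/2, b/2] and R̃ = [−a/2 + x, a/2 − x] × [−b/2 − y, b/2 + y]. Then ∫_{R̃ △ R} d_∞(z, ∂R) dz = y²(a − 2x) − b³/12 + x b²/2. -/

import Mathlib

open MeasureTheory Set

/-- `d_∞(z, ∂F)`: sup-norm distance from `z` to the topological boundary of `F`
(the product distance on `ℝ × ℝ` is the sup distance). -/
noncomputable def dinfty (z : ℝ × ℝ) (F : Set (ℝ × ℝ)) : ℝ :=
  Metric.infDist z (frontier F)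

/-- The rectangle `[-a/2, a/2] × [-b/2, b/2]`. -/
def rect (a b : ℝ) : Set (ℝ × ℝ) :=
  Set.Icc (-(a / 2)) (a / 2) ×ˢ Set.Icc (-(b / 2)) (b / 2)

/-!
In the sup norm the distance from `z = (u, v)` to `∂R` is `|max (|u| - a/2) (|v| - b/2)|`.
`R̃ \ R` consists of two horizontal strips of height `y` over a base of length `a - 2x`, on which
this is `|v| - b/2`; `R \ R̃` consists of two vertical strips of width `x`, on which it is
`min (a/2 - |u|) (b/2 - |v|)`. Because `x ≥ b/2`, integrating the latter in `u` first always
meets the switch of the minimum inside the strip, giving `2 (x w - w²/2)` with `w = b/2 - |v|`,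
and the remaining one-dimensional integrals are polynomial.
-/

open intervalIntegral

lemma mem_frontier_rect {a b : ℝ} {z : ℝ × ℝ} :
    z ∈ frontier (rect a b) ↔
      (|z.1| ≤ a / 2 ∧ |z.2| ≤ b / 2) ∧ ¬(|z.1| < a / 2 ∧ |z.2| < b / 2) := by
  have hclosed : IsClosed (rect a b) := isClosed_Icc.prod isClosed_Icc
  rw [hclosed.frontier_eq, rect, interior_prod_eq, interior_Icc, interior_Icc]
  simp only [mem_sdiff, mem_prod, mem_Icc, mem_Ioo, ← abs_le, ← abs_lt]

lemma exists_abs_eq_abs_sub_eq {c : ℝ} (hc : 0 ≤ c) (t : ℝ) :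
    ∃ p, |p| = c ∧ |t - p| = |(|t| - c)| := by
  rcases le_total 0 t with ht | ht
  · exact ⟨c, abs_of_nonneg hc, by rw [abs_of_nonneg ht]⟩
  · refine ⟨-c, by rw [abs_neg, abs_of_nonneg hc], ?_⟩
    rw [abs_of_nonpos ht, ← abs_neg]
    ring_nf

lemma exists_mem_frontier_rect_dist_eq {a b : ℝ} (ha : 0 ≤ a) (hb : 0 ≤ b) (z : ℝ × ℝ) :
    ∃ w ∈ frontier (rect a b), dist z w = |max (|z.1| - a / 2) (|z.2| - b / 2)| := by
  obtain ⟨u, v⟩ := z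
  obtain ⟨p, hp, hup⟩ := exists_abs_eq_abs_sub_eq (c := a / 2) (by linarith) u
  obtain ⟨q, hq, hvq⟩ := exists_abs_eq_abs_sub_eq (c := b / 2) (by linarith) v
  simp only [mem_frontier_rect, Prod.dist_eq, Real.dist_eq, Prod.exists]
  by_cases hv : |v| ≤ b / 2 ∧ a / 2 - |u| ≤ b / 2 - |v|
  · refine ⟨p, v, ⟨⟨hp.le, hv.1⟩, fun h ↦ h.1.ne hp⟩, ?_⟩
    rw [sub_self, abs_zero, max_eq_left (abs_nonneg _), hup, max_eq_left (by linarith)]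
  by_cases hu : |u| ≤ a / 2 ∧ b / 2 - |v| ≤ a / 2 - |u|
  · refine ⟨u, q, ⟨⟨hu.1, hq.le⟩, fun h ↦ h.2.ne hq⟩, ?_⟩
    rw [sub_self, abs_zero, max_eq_right (abs_nonneg _), hvq, max_eq_right (by linarith)]
  · push Not at hu hv
    have hu' : a / 2 < |u| := by
      by_contra! h
      linarith [hu h, hv (by linarith [hu h])]
    have hv' : b / 2 < |v| := by
      by_contra! h
      linarith [hv h, hu (by linarith [hv h])]
    refine ⟨p, q, ⟨⟨hp.le, hq.le⟩, fun h ↦ h.1.ne hp⟩, ?_⟩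
    rw [hup, hvq, abs_of_pos (sub_pos.2 hu'), abs_of_pos (sub_pos.2 hv'),
      abs_of_pos (lt_max_of_lt_left (sub_pos.2 hu'))]

/-- `max (|z.1| - a / 2) (|z.2| - b / 2)` is the signed sup-distance from `z` to `rect a b`. -/
lemma dinfty_rect {a b : ℝ} (ha : 0 ≤ a) (hb : 0 ≤ b) (z : ℝ × ℝ) :
    dinfty z (rect a b) = |max (|z.1| - a / 2) (|z.2| - b / 2)| := by
  obtain ⟨w, hw, hdist⟩ := exists_mem_frontier_rect_dist_eq ha hb z
  refine le_antisymm (hdist ▸ Metric.infDist_le_dist_of_mem hw) ?_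
  refine (Metric.le_infDist ⟨w, hw⟩).2 fun w' hw' ↦ ?_
  obtain ⟨⟨hw1, hw2⟩, hbdry⟩ := mem_frontier_rect.1 hw'
  have h1 : |(|z.1| - |w'.1|)| ≤ dist z w' := (abs_abs_sub_abs_le_abs_sub _ _).trans
    ((Real.dist_eq _ _).symm.trans_le (le_max_left _ _))
  have h2 : |(|z.2| - |w'.2|)| ≤ dist z w' := (abs_abs_sub_abs_le_abs_sub _ _).trans
    ((Real.dist_eq _ _).symm.trans_le (le_max_right _ _))
  rw [abs_le] at h1 h2
  rw [abs_le']
  refine ⟨max_le (by linarith) (by linarith), ?_⟩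
  rcases not_and_or.1 hbdry with h | h
  · linarith [le_max_left (|z.1| - a / 2) (|z.2| - b / 2)]
  · linarith [le_max_right (|z.1| - a / 2) (|z.2| - b / 2)]

lemma setIntegral_Icc_comp_abs {f : ℝ → ℝ} (hf : Continuous f) {d : ℝ} (hd : 0 ≤ d) :
    ∫ t in Icc (-d) d, f |t| = 2 * ∫ t in (0)..d, f t := by
  have hfa : Continuous fun t ↦ f |t| := hf.comp continuous_abs
  have hneg : ∫ t in -d..0, f |t| = ∫ t in -d..0, f (-t) :=
    integral_congr fun t ht ↦ by
      rw [uIcc_of_le (by linarith)] at ht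
      rw [abs_of_nonpos ht.2]
  have hpos : ∫ t in (0)..d, f |t| = ∫ t in (0)..d, f t :=
    integral_congr fun t ht ↦ by
      rw [uIcc_of_le hd] at ht
      rw [abs_of_nonneg ht.1]
  rw [integral_Icc_eq_integral_Ioc, ← integral_of_le (by linarith),
    ← integral_add_adjacent_intervals (b := 0) (hfa.intervalIntegrable _ _)
      (hfa.intervalIntegrable _ _), hneg, hpos, integral_comp_neg, neg_zero, neg_neg, two_mul]

lemma setIntegral_Icc_sdiff_Icc_comp_abs {f : ℝ → ℝ} (hf : Continuous f) {c d : ℝ}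
    (hc : 0 ≤ c) (hcd : c ≤ d) :
    ∫ t in Icc (-d) d \ Icc (-c) c, f |t| = 2 * ∫ t in c..d, f t := by
  have hfa : Continuous fun t ↦ f |t| := hf.comp continuous_abs
  rw [setIntegral_sdiff measurableSet_Icc hfa.integrableOn_Icc
      (Icc_subset_Icc (by linarith) hcd), setIntegral_Icc_comp_abs hf (hc.trans hcd),
    setIntegral_Icc_comp_abs hf hc, ← mul_sub,
    intervalIntegral.integral_interval_sub_left (hf.intervalIntegrable _ _)
      (hf.intervalIntegrable _ _)]

lemma integral_min_const {w x : ℝ} (hw : 0 ≤ w) (hwx : w ≤ x) :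
    ∫ s in (0)..x, min s w = x * w - w ^ 2 / 2 := by
  have hc : Continuous fun s : ℝ ↦ min s w := continuous_id.min continuous_const
  have hlow : ∫ s in (0)..w, min s w = ∫ s in (0)..w, s :=
    integral_congr fun s hs ↦ by
      rw [uIcc_of_le hw] at hs
      exact min_eq_left hs.2
  have hhigh : ∫ s in w..x, min s w = ∫ _ in w..x, w :=
    integral_congr fun s hs ↦ by
      rw [uIcc_of_le hwx] at hs
      exact min_eq_right hs.1
  rw [← integral_add_adjacent_intervals (b := w) (hc.intervalIntegrable _ _)
    (hc.intervalIntegrable _ _), hlow, hhigh, integral_id, intervalIntegral.integral_const,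
    smul_eq_mul]
  ring

lemma dinfty_rect_of_abs_le {a b u v : ℝ} (hu : |u| ≤ a / 2) (hv : |v| ≤ b / 2) :
    dinfty (u, v) (rect a b) = min (a / 2 - |u|) (b / 2 - |v|) := by
  rw [dinfty_rect (by linarith [abs_nonneg u]) (by linarith [abs_nonneg v]),
    abs_of_nonpos (max_le (by linarith) (by linarith)), ← min_neg_neg, neg_sub, neg_sub]

lemma dinfty_rect_of_abs_le_of_le_abs {a b u v : ℝ} (hb : 0 ≤ b)
    (hu : |u| ≤ a / 2) (hv : b / 2 ≤ |v|) :
    dinfty (u, v) (rect a b) = |v| - b / 2 := by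
  rw [dinfty_rect (by linarith [abs_nonneg u]) hb, max_eq_right (by linarith),
    abs_of_nonneg (by linarith)]

lemma integrableOn_dinfty_rect_sdiff (F : Set (ℝ × ℝ)) (c d : ℝ) (s : Set (ℝ × ℝ)) :
    IntegrableOn (fun z ↦ dinfty z F) (rect c d \ s) :=
  ((Metric.continuous_infDist_pt _).continuousOn.integrableOn_compact
    (isCompact_Icc.prod isCompact_Icc)).mono_set sdiff_subset

lemma rect_sdiff_rect_of_le_left {a b c d : ℝ} (hca : c ≤ a) :
    rect c d \ rect a b =
      Icc (-(c / 2)) (c / 2) ×ˢ (Icc (-(d / 2)) (d / 2) \ Icc (-(b / 2)) (b / 2)) := by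
  have hsub : Icc (-(c / 2)) (c / 2) ⊆ Icc (-(a / 2)) (a / 2) :=
    Icc_subset_Icc (by linarith) (by linarith)
  rw [rect, rect, prod_sdiff_prod, sdiff_eq_empty.2 hsub, empty_prod, union_empty]

lemma rect_sdiff_rect_of_le_right {a b c d : ℝ} (hbd : b ≤ d) :
    rect a b \ rect c d =
      (Icc (-(a / 2)) (a / 2) \ Icc (-(c / 2)) (c / 2)) ×ˢ Icc (-(b / 2)) (b / 2) := by
  have hsub : Icc (-(b / 2)) (b / 2) ⊆ Icc (-(d / 2)) (d / 2) :=
    Icc_subset_Icc (by linarith) (by linarith)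
  rw [rect, rect, prod_sdiff_prod, sdiff_eq_empty.2 hsub, prod_empty, empty_union]

lemma setIntegral_dinfty_rect_outside {a b c d : ℝ} (hc : 0 ≤ c) (hca : c ≤ a) (hb : 0 ≤ b)
    (hbd : b ≤ d) :
    ∫ z in rect c d \ rect a b, dinfty z (rect a b) = c * (d - b) ^ 2 / 4 := by
  have hint := integrableOn_dinfty_rect_sdiff (rect a b) c d (rect a b)
  rw [rect_sdiff_rect_of_le_left hca] at hint ⊢
  have hinner : ∀ u ∈ Icc (-(c / 2)) (c / 2),
      ∫ v in Icc (-(d / 2)) (d / 2) \ Icc (-(b / 2)) (b / 2), dinfty (u, v) (rect a b) =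
        (d - b) ^ 2 / 4 := fun u hu ↦ by
    have hu' : |u| ≤ a / 2 := (abs_le.2 hu).trans (by linarith)
    rw [setIntegral_congr_fun (measurableSet_Icc.diff measurableSet_Icc)
        (g := fun v ↦ (fun t ↦ t - b / 2) |v|) fun v hv ↦
          dinfty_rect_of_abs_le_of_le_abs hb hu'
            (le_of_not_ge fun h ↦ hv.2 (abs_le.1 h)),
      setIntegral_Icc_sdiff_Icc_comp_abs (f := fun t ↦ t - b / 2) (by fun_prop) (by linarith)
        (by linarith)]
    rw [intervalIntegral.integral_sub intervalIntegrable_id intervalIntegrable_const,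
      integral_id, intervalIntegral.integral_const, smul_eq_mul]
    ring
  rw [Measure.volume_eq_prod, setIntegral_prod _ hint,
    setIntegral_congr_fun measurableSet_Icc hinner, setIntegral_const,
    Real.volume_real_Icc_of_le (by linarith), smul_eq_mul]
  ring

lemma setIntegral_dinfty_rect_inside {a b c d : ℝ} (hc : 0 ≤ c) (hb : 0 ≤ b) (hbd : b ≤ d)
    (hbac : b ≤ a - c) :
    ∫ z in rect a b \ rect c d, dinfty z (rect a b) = (a - c) * b ^ 2 / 4 - b ^ 3 / 12 := by
  have hint := integrableOn_dinfty_rect_sdiff (rect a b) a b (rect c d)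
  rw [rect_sdiff_rect_of_le_right hbd] at hint ⊢
  have hinner : ∀ v ∈ Icc (-(b / 2)) (b / 2),
      ∫ u in Icc (-(a / 2)) (a / 2) \ Icc (-(c / 2)) (c / 2), dinfty (u, v) (rect a b) =
        2 * ((a / 2 - c / 2) * (b / 2 - |v|) - (b / 2 - |v|) ^ 2 / 2) := fun v hv ↦ by
    have hv' : |v| ≤ b / 2 := abs_le.2 hv
    rw [setIntegral_congr_fun (measurableSet_Icc.diff measurableSet_Icc)
        (g := fun u ↦ (fun t ↦ min (a / 2 - t) (b / 2 - |v|)) |u|) fun u hu ↦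
          dinfty_rect_of_abs_le (abs_le.2 hu.1) hv',
      setIntegral_Icc_sdiff_Icc_comp_abs (f := fun t ↦ min (a / 2 - t) (b / 2 - |v|))
        (by fun_prop) (by linarith) (by linarith),
      integral_comp_sub_left (fun s ↦ min s (b / 2 - |v|)), sub_self,
      integral_min_const (by linarith) (by linarith [abs_nonneg v])]
  rw [IntegrableOn, Measure.volume_eq_prod, ← Measure.prod_restrict] at hint
  rw [Measure.volume_eq_prod, ← Measure.prod_restrict, integral_prod_symm _ hint,
    setIntegral_congr_fun measurableSet_Icc hinner,
    setIntegral_Icc_comp_abs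
      (f := fun t ↦ 2 * ((a / 2 - c / 2) * (b / 2 - t) - (b / 2 - t) ^ 2 / 2)) (by fun_prop)
      (by linarith),
    integral_comp_sub_left (fun s ↦ 2 * ((a / 2 - c / 2) * s - s ^ 2 / 2)), sub_self, sub_zero]
  rw [intervalIntegral.integral_const_mul, intervalIntegral.integral_sub
      (Continuous.intervalIntegrable (by fun_prop) _ _)
      (Continuous.intervalIntegrable (by fun_prop) _ _), intervalIntegral.integral_const_mul,
    integral_id, intervalIntegral.integral_div, integral_pow]
  ring

theorem statement6_general (a b x y : ℝ) (hb : 0 < b)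
    (hx0 : b / 2 ≤ x) (hx : x < a / 2) (hy : 0 ≤ y) :
    ∫ z in symmDiff (rect (a - 2 * x) (b + 2 * y)) (rect a b),
        dinfty z (rect a b) =
      y ^ 2 * (a - 2 * x) - b ^ 3 / 12 + x * b ^ 2 / 2 := by
  have hmeas : MeasurableSet (rect a b \ rect (a - 2 * x) (b + 2 * y)) :=
    (measurableSet_Icc.prod measurableSet_Icc).diff (measurableSet_Icc.prod measurableSet_Icc)
  rw [Set.symmDiff_def, setIntegral_union disjoint_sdiff_sdiff hmeas
      (integrableOn_dinfty_rect_sdiff _ _ _ _) (integrableOn_dinfty_rect_sdiff _ _ _ _),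
    setIntegral_dinfty_rect_outside (by linarith) (by linarith) hb.le (by linarith),
    setIntegral_dinfty_rect_inside (by linarith) hb.le (by linarith) (by linarith)]
  ring

theorem statement6 (a b x y : ℝ) (ha : 0 < a) (hb : 0 < b)
    (hx0 : b / 2 ≤ x) (hx : x < a / 2) (hy : 0 ≤ y) :
    ∫ z in symmDiff (rect (a - 2 * x) (b + 2 * y)) (rect a b),
        dinfty z (rect a b) =
      y ^ 2 * (a - 2 * x) - b ^ 3 / 12 + x * b ^ 2 / 2 :=
  statement6_general a b x y hb hx0 hx hy
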